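/- Let Y be a finite simple graph and e = {v,w} a bridge of Y joining subgraphs Y₁ and Y₂ (so Y − e has components containing Y₁ and Y₂ respectively). Then κ(Y) = κ(Y₁)·κ(Y₂). -/

import Mathlib

/-- An orientation of a simple graph: a choice of direction for each edge. -/
structure GraphOrientation {V : Type*} (G : SimpleGraph V) where
  dir : V → V → Prop
  consistent : ∀ u v, G.Adj u v ↔ (dir u v ∨ dir v u)
  asymm : ∀ u v, dir u v → ¬ dir v u

/-- An orientation is acyclic if its directed graph has no directed cycle. -/
def GraphOrientation.IsAcyclic {V : Type*} {G : SimpleGraph V} (O : GraphOrientation G) : Prop :=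
  ∀ v, ¬ Relation.TransGen O.dir v v

/-- The type of acyclic orientations of `G`. -/
def AcycGraphOrientation {V : Type*} (G : SimpleGraph V) := {O : GraphOrientation G // O.IsAcyclic}

/-- `Click O O'` holds when `O'` is obtained from `O` by a source-to-sink operation:
reversing all edges incident to some source vertex `v`. -/
def Click {V : Type*} {G : SimpleGraph V} (O O' : GraphOrientation G) : Prop :=
  ∃ v, (∀ u, ¬ O.dir u v) ∧
    ∀ u w, O'.dir u w ↔ (((u = v ∨ w = v) ∧ O.dir w u) ∨ (u ≠ v ∧ w ≠ v ∧ O.dir u w))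

/-- κ(G): the number of equivalence classes of acyclic orientations of `G` under the
equivalence generated by source-to-sink operations. -/
noncomputable def kappa {V : Type*} (G : SimpleGraph V) : ℕ :=
  Nat.card (Quot (fun A B : AcycGraphOrientation G => Click A.1 B.1))

/-- Two graphs joined by a single bridge edge from `v ∈ V₁` to `w ∈ V₂`. -/
def bridgeGraph {V₁ V₂ : Type*} (G₁ : SimpleGraph V₁) (G₂ : SimpleGraph V₂)
    (v : V₁) (w : V₂) : SimpleGraph (V₁ ⊕ V₂) :=
  SimpleGraph.fromRel (fun x y =>
    match x, y with
    | .inl a, .inl b => G₁.Adj a b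
    | .inr a, .inr b => G₂.Adj a b
    | .inl a, .inr b => a = v ∧ b = w
    | _, _ => False)


/-!
Restricting an acyclic orientation of the bridge graph to its two sides gives a map from
source-to-sink classes on `G₁ ⊕ G₂ + vw` to pairs of classes: a click at a vertex of one side is
a click on that side and leaves the other side unchanged. Conversely, the class of the orientation
glued from the two sides does not depend on the direction of the bridge: in the orientation whose
bridge points into `G₁`, the vertex set of `G₂` has no incoming edges, and clicking its vertices
one by one (in an order compatible with the orientation) reverses exactly the bridge. With this
freedom every click on one side lifts to a click on the glued orientation, so gluing is well
defined on classes and inverse to restriction.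
-/

open Relation

namespace GraphOrientation

variable {V V' W : Type*} {G : SimpleGraph V} {G' : SimpleGraph V'} {O O' : GraphOrientation G}

@[ext]
theorem ext (h : ∀ u w, O.dir u w ↔ O'.dir u w) : O = O' := by
  obtain ⟨d, _, _⟩ := O
  obtain ⟨d', _, _⟩ := O'
  obtain rfl : d = d' := funext₂ fun u w => propext (h u w)
  rfl

theorem dir_irrefl (O : GraphOrientation G) (u : V) : ¬ O.dir u u :=
  fun h => O.asymm u u h h

def reverseAcross (O : GraphOrientation G) (S : Set V) : GraphOrientation G where
  dir u w := ((u ∈ S ↔ w ∈ S) ∧ O.dir u w) ∨ (¬ (u ∈ S ↔ w ∈ S) ∧ O.dir w u)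
  consistent u w := by
    have := O.consistent u w
    tauto
  asymm u w := by
    have := O.asymm u w
    have := O.asymm w u
    tauto

def PredClosed (O : GraphOrientation G) (S : Set V) : Prop :=
  ∀ ⦃u w⦄, w ∈ S → O.dir u w → u ∈ S

theorem reverseAcross_reverseAcross (O : GraphOrientation G) (S T : Set V) :
    (O.reverseAcross S).reverseAcross T = O.reverseAcross (symmDiff S T) := by
  ext u w
  simp only [reverseAcross, Set.mem_symmDiff]
  by_cases u ∈ S <;> by_cases w ∈ S <;> by_cases u ∈ T <;> by_cases w ∈ T <;> simp [*]

theorem reverseAcross_empty (O : GraphOrientation G) : O.reverseAcross ∅ = O := by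
  ext u w
  simp [reverseAcross]

theorem click_iff : Click O O' ↔ ∃ x, (∀ u, ¬ O.dir u x) ∧ O' = O.reverseAcross {x} := by
  refine exists_congr fun x => and_congr_right fun _ => ?_
  rw [GraphOrientation.ext_iff]
  refine forall₂_congr fun u w => iff_congr Iff.rfl ?_
  have := O.dir_irrefl x
  simp only [reverseAcross, Set.mem_singleton_iff]
  by_cases hu : u = x <;> by_cases hw : w = x <;> subst_vars <;> tauto

theorem isAcyclic_of_map (f : V → W) (r : W → W → Prop) [IsTrans W r] [Std.Irrefl r]
    (h : ∀ u w, O.dir u w → r (f u) (f w)) : O.IsAcyclic :=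
  fun _ hu => irrefl _ (transGen_eq_self (r := r) ▸ hu.lift f h)

theorem IsAcyclic.irrefl_transGen (hO : O.IsAcyclic) : Std.Irrefl (TransGen O.dir) := ⟨hO⟩

theorem IsAcyclic.reverseAcross (hO : O.IsAcyclic) {S : Set V} (hS : O.PredClosed S) :
    (O.reverseAcross S).IsAcyclic := by
  classical
  have := hO.irrefl_transGen
  -- the edges leaving `S` now enter it, so `S` can be placed after its complement
  refine isAcyclic_of_map (fun u => if u ∈ S then Sum.inr u else Sum.inl u)
    (Sum.Lex (TransGen O.dir) (TransGen O.dir)) fun u w h => ?_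
  by_cases hu : u ∈ S <;> by_cases hw : w ∈ S <;>
    simp only [GraphOrientation.reverseAcross, hu, hw, iff_true, iff_false, not_true,
      not_false_iff, true_and, false_and, or_false, false_or] at h <;>
    simp only [hu, hw, if_true, if_false]
  · exact Sum.Lex.inr (.single h)
  · exact (hw (hS hu h)).elim
  · exact Sum.Lex.sep _ _
  · exact Sum.Lex.inl (.single h)

theorem IsAcyclic.click (hO : O.IsAcyclic) (h : Click O O') : O'.IsAcyclic := by
  obtain ⟨x, hx, rfl⟩ := click_iff.mp h
  exact hO.reverseAcross fun u w hw huw => (hx u (Set.mem_singleton_iff.mp hw ▸ huw)).elim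

theorem IsAcyclic.of_reflTransGen_click (hO : O.IsAcyclic) (h : ReflTransGen Click O O') :
    O'.IsAcyclic := by
  induction h with
  | refl => exact hO
  | tail _ hc ih => exact ih.click hc

theorem IsAcyclic.exists_forall_not_dir (hO : O.IsAcyclic) {S : Set V} (hS : S.Finite)
    (hne : S.Nonempty) : ∃ y ∈ S, ∀ x ∈ S, ¬ O.dir y x := by
  have : IsStrictOrder V (flip (TransGen O.dir)) :=
    { irrefl := hO, trans := fun _ _ _ h h' => h'.trans h }
  obtain ⟨y, hy⟩ := hne
  obtain ⟨⟨m, hm⟩, -, hmax⟩ :=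
    (hS.wellFoundedOn (r := flip (TransGen O.dir))).has_min Set.univ ⟨⟨y, hy⟩, trivial⟩
  exact ⟨m, hm, fun x hx hmx => hmax ⟨x, hx⟩ trivial (.single hmx)⟩

theorem IsAcyclic.reflTransGen_click_reverseAcross (hO : O.IsAcyclic) {S : Set V}
    (hS : S.Finite) (hclosed : O.PredClosed S) : ReflTransGen Click O (O.reverseAcross S) := by
  classical
  obtain ⟨S, rfl⟩ := hS.exists_finset_coe
  clear hS
  induction S using Finset.strongInduction with
  | H S ih =>
  rcases S.eq_empty_or_nonempty with rfl | hne
  · rw [Finset.coe_empty, reverseAcross_empty]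
  obtain ⟨y, hy, hmax⟩ := hO.exists_forall_not_dir S.finite_toSet hne
  have hclosed' : O.PredClosed (S.erase y : Set V) := by
    simp only [PredClosed, Finset.coe_erase, Set.mem_sdiff, Set.mem_singleton_iff]
    rintro u w ⟨hw, hwy⟩ huw
    exact ⟨hclosed hw huw, by rintro rfl; exact hmax w hw huw⟩
  -- `y` has no successor in `S`, and once the rest of `S` is clicked its predecessors, all in
  -- `S`, have become successors: so `y` is a source and can be clicked last
  refine (ih _ (Finset.erase_ssubset hy) hclosed').tail (click_iff.mpr ⟨y, fun u hu => ?_, ?_⟩)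
  · have hy' : y ∉ (S.erase y : Set V) := by simp
    rcases hu with ⟨hu, huy⟩ | ⟨hu, hyu⟩
    · exact hy' (hu.mp (Finset.mem_erase.mpr
        ⟨fun h => O.dir_irrefl y (h ▸ huy), hclosed hy huy⟩))
    · have hu' : u ∈ S.erase y := by_contra fun h => hu (iff_of_false h hy')
      exact hmax u (Finset.mem_of_mem_erase hu') hyu
  · rw [reverseAcross_reverseAcross]
    congr 1
    ext x
    by_cases x = y <;> simp_all

def comap (f : G' ↪g G) (O : GraphOrientation G) : GraphOrientation G' where
  dir a b := O.dir (f a) (f b)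
  consistent _ _ := f.map_adj_iff.symm.trans (O.consistent _ _)
  asymm _ _ := O.asymm _ _

theorem IsAcyclic.comap (f : G' ↪g G) (hO : O.IsAcyclic) : (O.comap f).IsAcyclic :=
  fun a ha => hO (f a) (ha.lift f fun _ _ h => h)

theorem comap_reverseAcross (f : G' ↪g G) (O : GraphOrientation G) (S : Set V) :
    (O.reverseAcross S).comap f = (O.comap f).reverseAcross (f ⁻¹' S) :=
  rfl

theorem comap_reverseAcross_singleton_apply (f : G' ↪g G) (O : GraphOrientation G) (a : V') :
    (O.reverseAcross {f a}).comap f = (O.comap f).reverseAcross {a} := by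
  rw [comap_reverseAcross, ← Set.image_singleton, f.injective.preimage_image]

theorem comap_reverseAcross_singleton_of_notMem (f : G' ↪g G) (O : GraphOrientation G) {x : V}
    (hx : x ∉ Set.range f) : (O.reverseAcross {x}).comap f = O.comap f := by
  rw [comap_reverseAcross, Set.preimage_singleton_eq_empty.mpr hx, reverseAcross_empty]

theorem Click.comap (f : G' ↪g G) (h : Click O O') :
    Click (O.comap f) (O'.comap f) ∨ O'.comap f = O.comap f := by
  obtain ⟨x, hx, rfl⟩ := click_iff.mp h
  by_cases hx' : x ∈ Set.range f
  · obtain ⟨a, rfl⟩ := hx'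
    rw [comap_reverseAcross_singleton_apply]
    exact .inl (click_iff.mpr ⟨a, fun u => hx (f u), rfl⟩)
  · exact .inr (comap_reverseAcross_singleton_of_notMem f O hx')

end GraphOrientation

open GraphOrientation

abbrev ClickClass {V : Type*} (G : SimpleGraph V) :=
  Quot (fun A B : AcycGraphOrientation G => Click A.1 B.1)

namespace ClickClass

variable {V V' : Type*} {G : SimpleGraph V} {G' : SimpleGraph V'} {O O' : GraphOrientation G}

def mk (O : GraphOrientation G) (hO : O.IsAcyclic) : ClickClass G := Quot.mk _ ⟨O, hO⟩

theorem mk_congr (hO : O.IsAcyclic) (hO' : O'.IsAcyclic) (h : O = O') : mk O hO = mk O' hO' := by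
  subst h
  rfl

theorem mk_eq_mk_of_click (hO : O.IsAcyclic) (hO' : O'.IsAcyclic) (h : Click O O') :
    mk O hO = mk O' hO' :=
  Quot.sound h

theorem mk_eq_mk_of_reflTransGen (hO : O.IsAcyclic) (hO' : O'.IsAcyclic)
    (h : ReflTransGen Click O O') : mk O hO = mk O' hO' := by
  induction h with
  | refl => rfl
  | tail h hc ih => exact (ih (hO.of_reflTransGen_click h)).trans (mk_eq_mk_of_click _ _ hc)

def comap (f : G' ↪g G) : ClickClass G → ClickClass G' :=
  Quot.lift (fun A => mk (A.1.comap f) (A.2.comap f)) fun A B h => by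
    rcases h.comap f with h | h
    · exact mk_eq_mk_of_click _ _ h
    · exact mk_congr _ _ h.symm

end ClickClass

section Bridge

variable {V₁ V₂ : Type*} {G₁ : SimpleGraph V₁} {G₂ : SimpleGraph V₂} {v : V₁} {w : V₂}

@[simp]
theorem bridgeGraph_adj_inl_inl {a c : V₁} :
    (bridgeGraph G₁ G₂ v w).Adj (.inl a) (.inl c) ↔ G₁.Adj a c := by
  simpa [bridgeGraph, G₁.adj_comm c a] using G₁.ne_of_adj

@[simp]
theorem bridgeGraph_adj_inr_inr {a c : V₂} :
    (bridgeGraph G₁ G₂ v w).Adj (.inr a) (.inr c) ↔ G₂.Adj a c := by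
  simpa [bridgeGraph, G₂.adj_comm c a] using G₂.ne_of_adj

@[simp]
theorem bridgeGraph_adj_inl_inr {a : V₁} {c : V₂} :
    (bridgeGraph G₁ G₂ v w).Adj (.inl a) (.inr c) ↔ a = v ∧ c = w := by
  simp [bridgeGraph]

@[simp]
theorem bridgeGraph_adj_inr_inl {a : V₁} {c : V₂} :
    (bridgeGraph G₁ G₂ v w).Adj (.inr c) (.inl a) ↔ a = v ∧ c = w := by
  simp [bridgeGraph]

def bridgeGraph.inl : G₁ ↪g bridgeGraph G₁ G₂ v w :=
  ⟨Function.Embedding.inl, bridgeGraph_adj_inl_inl⟩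

def bridgeGraph.inr : G₂ ↪g bridgeGraph G₁ G₂ v w :=
  ⟨Function.Embedding.inr, bridgeGraph_adj_inr_inr⟩

@[simp]
theorem bridgeGraph.coe_inl : ⇑(bridgeGraph.inl : G₁ ↪g bridgeGraph G₁ G₂ v w) = Sum.inl :=
  rfl

@[simp]
theorem bridgeGraph.coe_inr : ⇑(bridgeGraph.inr : G₂ ↪g bridgeGraph G₁ G₂ v w) = Sum.inr :=
  rfl

def bridgeOrientation (O₁ : GraphOrientation G₁) (O₂ : GraphOrientation G₂) (forward : Bool) :
    GraphOrientation (bridgeGraph G₁ G₂ v w) where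
  dir
    | .inl a, .inl c => O₁.dir a c
    | .inr a, .inr c => O₂.dir a c
    | .inl a, .inr c => a = v ∧ c = w ∧ forward
    | .inr c, .inl a => a = v ∧ c = w ∧ !forward
  consistent := by
    rintro (a | a) (c | c)
    · simpa using O₁.consistent a c
    · cases forward <;> simp
    · cases forward <;> simp
    · simpa using O₂.consistent a c
  asymm := by
    rintro (a | a) (c | c)
    · exact O₁.asymm a c
    · cases forward <;> simp
    · cases forward <;> simp
    · exact O₂.asymm a c

variable {O₁ O₁' : GraphOrientation G₁} {O₂ O₂' : GraphOrientation G₂}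

theorem exists_bridgeOrientation_eq (O : GraphOrientation (bridgeGraph G₁ G₂ v w)) :
    ∃ forward,
      bridgeOrientation (O.comap bridgeGraph.inl) (O.comap bridgeGraph.inr) forward = O := by
  classical
  refine ⟨decide (O.dir (.inl v) (.inr w)), ?_⟩
  have hadj : ∀ {x y}, O.dir x y → (bridgeGraph G₁ G₂ v w).Adj x y :=
    fun h => (O.consistent _ _).2 (.inl h)
  ext (a | a) (c | c)
  · rfl
  · constructor
    · rintro ⟨rfl, rfl, h⟩
      simpa using h
    · intro h
      obtain ⟨rfl, rfl⟩ := bridgeGraph_adj_inl_inr.mp (hadj h)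
      exact ⟨rfl, rfl, decide_eq_true h⟩
  · constructor
    · rintro ⟨rfl, rfl, h⟩
      exact ((O.consistent _ _).1 (by simp)).resolve_left (by simpa using h)
    · intro h
      obtain ⟨rfl, rfl⟩ := bridgeGraph_adj_inr_inl.mp (hadj h)
      exact ⟨rfl, rfl, by simpa using O.asymm _ _ h⟩
  · rfl

theorem bridgeOrientation_reverseAcross_range_inr (O₁ : GraphOrientation G₁)
    (O₂ : GraphOrientation G₂) :
    (bridgeOrientation (v := v) (w := w) O₁ O₂ false).reverseAcross (Set.range Sum.inr) =
      bridgeOrientation O₁ O₂ true := by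
  ext (a | a) (c | c) <;> simp [reverseAcross, bridgeOrientation]

theorem predClosed_range_inr_bridgeOrientation_false :
    (bridgeOrientation (v := v) (w := w) O₁ O₂ false).PredClosed (Set.range Sum.inr) := by
  rintro (a | a) _ ⟨c, rfl⟩ h
  · simp [bridgeOrientation] at h
  · exact ⟨a, rfl⟩

theorem bridgeOrientation_isAcyclic (h₁ : O₁.IsAcyclic) (h₂ : O₂.IsAcyclic) (forward : Bool) :
    (bridgeOrientation (v := v) (w := w) O₁ O₂ forward).IsAcyclic := by
  have hfalse : (bridgeOrientation (v := v) (w := w) O₁ O₂ false).IsAcyclic := by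
    have := h₁.irrefl_transGen
    have := h₂.irrefl_transGen
    refine isAcyclic_of_map Sum.swap (Sum.Lex (TransGen O₂.dir) (TransGen O₁.dir)) ?_
    rintro (a | a) (c | c) h
    · exact Sum.Lex.inr (.single h)
    · simp [bridgeOrientation] at h
    · exact Sum.Lex.sep _ _
    · exact Sum.Lex.inl (.single h)
  cases forward
  · exact hfalse
  · rw [← bridgeOrientation_reverseAcross_range_inr]
    exact hfalse.reverseAcross predClosed_range_inr_bridgeOrientation_false

theorem click_bridgeOrientation_left (h : Click O₁ O₁') : ∃ forward,
    Click (bridgeOrientation (v := v) (w := w) O₁ O₂ true) (bridgeOrientation O₁' O₂ forward) := by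
  obtain ⟨a, ha, rfl⟩ := click_iff.mp h
  set O := bridgeOrientation (v := v) (w := w) O₁ O₂ true
  have hclick :
      Click O (O.reverseAcross {(bridgeGraph.inl : G₁ ↪g bridgeGraph G₁ G₂ v w) a}) := by
    refine click_iff.mpr ⟨_, ?_, rfl⟩
    rintro (c | c) hc
    · exact ha c hc
    · simp [O, bridgeOrientation] at hc
  obtain ⟨forward, hforward⟩ := exists_bridgeOrientation_eq (O.reverseAcross {bridgeGraph.inl a})
  rw [← hforward, comap_reverseAcross_singleton_apply,
    comap_reverseAcross_singleton_of_notMem _ _ (by simp)] at hclick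
  exact ⟨forward, hclick⟩

theorem click_bridgeOrientation_right (h : Click O₂ O₂') : ∃ forward,
    Click (bridgeOrientation (v := v) (w := w) O₁ O₂ false) (bridgeOrientation O₁ O₂' forward) := by
  obtain ⟨a, ha, rfl⟩ := click_iff.mp h
  set O := bridgeOrientation (v := v) (w := w) O₁ O₂ false
  have hclick :
      Click O (O.reverseAcross {(bridgeGraph.inr : G₂ ↪g bridgeGraph G₁ G₂ v w) a}) := by
    refine click_iff.mpr ⟨_, ?_, rfl⟩
    rintro (c | c) hc
    · simp [O, bridgeOrientation] at hc
    · exact ha c hc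
  obtain ⟨forward, hforward⟩ := exists_bridgeOrientation_eq (O.reverseAcross {bridgeGraph.inr a})
  rw [← hforward, comap_reverseAcross_singleton_apply,
    comap_reverseAcross_singleton_of_notMem _ _ (by simp)] at hclick
  exact ⟨forward, hclick⟩

end Bridge

namespace ClickClass

variable {V₁ V₂ : Type*} [Finite V₂] {G₁ : SimpleGraph V₁} {G₂ : SimpleGraph V₂} {v : V₁} {w : V₂}
  {O₁ : GraphOrientation G₁} {O₂ : GraphOrientation G₂}

theorem mk_bridgeOrientation_eq (h₁ : O₁.IsAcyclic) (h₂ : O₂.IsAcyclic) (forward forward' : Bool) :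
    mk (bridgeOrientation (v := v) (w := w) O₁ O₂ forward) (bridgeOrientation_isAcyclic h₁ h₂ _) =
      mk (bridgeOrientation O₁ O₂ forward') (bridgeOrientation_isAcyclic h₁ h₂ _) := by
  have hflip := (bridgeOrientation_isAcyclic (v := v) (w := w) h₁ h₂ false)
    |>.reflTransGen_click_reverseAcross (Set.finite_range Sum.inr)
      predClosed_range_inr_bridgeOrientation_false
  rw [bridgeOrientation_reverseAcross_range_inr] at hflip
  have key := mk_eq_mk_of_reflTransGen (bridgeOrientation_isAcyclic h₁ h₂ _)
    (bridgeOrientation_isAcyclic h₁ h₂ _) hflip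
  cases forward <;> cases forward'
  exacts [rfl, key, key.symm, rfl]

def bridge : ClickClass G₁ → ClickClass G₂ → ClickClass (bridgeGraph G₁ G₂ v w) :=
  Quot.lift₂
    (fun A B => mk (bridgeOrientation A.1 B.1 true) (bridgeOrientation_isAcyclic A.2 B.2 _))
    (fun A B B' h => by
      obtain ⟨forward, hc⟩ := click_bridgeOrientation_right (O₁ := A.1) (v := v) (w := w) h
      calc _ = mk (bridgeOrientation A.1 B.1 false) (bridgeOrientation_isAcyclic A.2 B.2 _) :=
            mk_bridgeOrientation_eq A.2 B.2 _ _
        _ = mk (bridgeOrientation A.1 B'.1 forward) (bridgeOrientation_isAcyclic A.2 B'.2 _) :=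
            mk_eq_mk_of_click _ _ hc
        _ = _ := mk_bridgeOrientation_eq A.2 B'.2 _ _)
    (fun A A' B h => by
      obtain ⟨forward, hc⟩ := click_bridgeOrientation_left (O₂ := B.1) (v := v) (w := w) h
      exact (mk_eq_mk_of_click _ (bridgeOrientation_isAcyclic A'.2 B.2 _) hc).trans
        (mk_bridgeOrientation_eq A'.2 B.2 _ _))

def bridgeEquiv : ClickClass (bridgeGraph G₁ G₂ v w) ≃ ClickClass G₁ × ClickClass G₂ where
  toFun q := (comap bridgeGraph.inl q, comap bridgeGraph.inr q)
  invFun p := bridge p.1 p.2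
  left_inv := by
    rintro ⟨O, hO⟩
    obtain ⟨forward, hforward⟩ := exists_bridgeOrientation_eq O
    exact (mk_bridgeOrientation_eq (hO.comap _) (hO.comap _) true forward).trans
      (mk_congr _ hO hforward)
  right_inv := by
    rintro ⟨⟨A⟩, ⟨B⟩⟩
    rfl

end ClickClass

theorem kappa_bridge_general {V₁ V₂ : Type*} [Fintype V₂]
    (G₁ : SimpleGraph V₁) (G₂ : SimpleGraph V₂) (v : V₁) (w : V₂) :
    kappa (bridgeGraph G₁ G₂ v w) = kappa G₁ * kappa G₂ :=
  (Nat.card_congr ClickClass.bridgeEquiv).trans (Nat.card_prod _ _)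

theorem kappa_bridge {V₁ V₂ : Type*} [Fintype V₁] [Fintype V₂]
    (G₁ : SimpleGraph V₁) (G₂ : SimpleGraph V₂) (v : V₁) (w : V₂) :
    kappa (bridgeGraph G₁ G₂ v w) = kappa G₁ * kappa G₂ :=
  kappa_bridge_general G₁ G₂ v w
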